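/- arXiv:2408.01022 — 3 statements merged into one kernel-verified Lean document; each statement's English description precedes it below -/
import Mathlib

section
/- If φ(x) = ax² + bx + c, then for every subset A ⊆ {1,…,N} with indicator vector z ∈ {0,1}^N, tr φ(L[A]) = a Σ_{i≠j} |L_{ij}|² z_i z_j + Σ_i (a L_{ii}² + b L_{ii} + c) z_i. Hence the DKPP with quadratic φ equals a fully visible Boltzmann machine with connections W_{ij} = a|L_{ij}|² (i≠j) and biases h_i = aL_{ii}² + bL_{ii} + c. -/
open ComplexOrder

section aux

variable {n : Type*} [Fintype n] [DecidableEq n]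

lemma aux_trace_conj (M : Matrix n n ℂ) (hM : M.IsHermitian) :
    (Matrix.diagonal (RCLike.ofReal ∘ hM.eigenvalues)).trace = M.trace := by
  conv_rhs => rw [hM.spectral_theorem, Unitary.conjStarAlgAut_apply]
  rw [Matrix.trace_mul_cycle]
  rw [show (star (Matrix.IsHermitian.eigenvectorUnitary hM : Matrix n n ℂ)) *
      (Matrix.IsHermitian.eigenvectorUnitary hM : Matrix n n ℂ) = 1 from
    Unitary.coe_star_mul_self _, one_mul]

lemma aux_sum_eigenvalues (M : Matrix n n ℂ) (hM : M.IsHermitian) :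
    ∑ i, hM.eigenvalues i = ∑ i, (M i i).re := by
  have h := aux_trace_conj M hM
  have : ((∑ i, hM.eigenvalues i : ℝ) : ℂ) = M.trace := by
    rw [← h, Matrix.trace_diagonal]
    push_cast
    rfl
  have h2 : M.trace = ∑ i, M i i := Matrix.trace.eq_1 M ▸ rfl
  calc ∑ i, hM.eigenvalues i = (((∑ i, hM.eigenvalues i : ℝ) : ℂ)).re := by simp
    _ = (M.trace).re := by rw [this]
    _ = ∑ i, (M i i).re := by rw [h2, Complex.re_sum]

lemma aux_sum_eigenvalues_sq (M : Matrix n n ℂ) (hM : M.IsHermitian) :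
    ∑ i, hM.eigenvalues i ^ 2 = ∑ i, ∑ j, ‖M i j‖ ^ 2 := by
  have hsp : M * M = (Matrix.IsHermitian.eigenvectorUnitary hM : Matrix n n ℂ) *
      (Matrix.diagonal (RCLike.ofReal ∘ hM.eigenvalues) *
        Matrix.diagonal (RCLike.ofReal ∘ hM.eigenvalues)) *
      (star (Matrix.IsHermitian.eigenvectorUnitary hM : Matrix n n ℂ)) := by
    conv_lhs => rw [hM.spectral_theorem, Unitary.conjStarAlgAut_apply]
    simp only [Matrix.mul_assoc]
    rw [← Matrix.mul_assoc (star (Matrix.IsHermitian.eigenvectorUnitary hM : Matrix n n ℂ)),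
      Unitary.coe_star_mul_self, Matrix.one_mul]
  have htr : (M * M).trace = ∑ i, ((hM.eigenvalues i : ℂ)) ^ 2 := by
    rw [hsp, Matrix.trace_mul_comm, ← Matrix.mul_assoc, Unitary.coe_star_mul_self,
      Matrix.one_mul, Matrix.diagonal_mul_diagonal, Matrix.trace_diagonal]
    simp [pow_two]
  have h1 : (M * M).trace = ∑ i, ∑ j, M i j * M j i := by
    simp [Matrix.trace, Matrix.diag, Matrix.mul_apply]
  have h2 : ∀ i j : n, M i j * M j i = ((‖M i j‖ ^ 2 : ℝ) : ℂ) := by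
    intro i j
    have hji : M j i = starRingEnd ℂ (M i j) := by
      have := congrFun (congrFun hM j) i
      simpa [Matrix.conjTranspose_apply] using this.symm
    rw [hji, Complex.mul_conj, Complex.sq_norm, Complex.normSq_eq_norm_sq, Complex.sq_norm]
  have key : ((∑ i, hM.eigenvalues i ^ 2 : ℝ) : ℂ) =
      ((∑ i, ∑ j, ‖M i j‖ ^ 2 : ℝ) : ℂ) := by
    push_cast
    rw [← htr, h1]
    simp only [h2]
    push_cast
    rfl
  exact_mod_cast key

end aux

/-- For quadratic `φ(x) = a x² + b x + c`, the DKPP exponent `tr φ(L[A])` (defined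
spectrally) equals the Boltzmann machine energy
`a ∑_{i≠j} |L_{ij}|² z_i z_j + ∑_i (a L_{ii}² + b L_{ii} + c) z_i`,
where `z` is the indicator vector of `A`. Hence a DKPP with quadratic `φ` is a fully
visible Boltzmann machine with connections `W_{ij} = a |L_{ij}|²` (for `i ≠ j`) and
biases `h_i = a L_{ii}² + b L_{ii} + c`. -/
theorem dkpp_quadratic_eq_boltzmann {N : ℕ} (a b c : ℝ)
    (L : Matrix (Fin N) (Fin N) ℂ) (hL : L.PosSemidef) (A : Finset (Fin N))
    (z : Fin N → ℝ) (hz : ∀ i, z i = if i ∈ A then 1 else 0) :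
    ∑ k : {x // x ∈ A},
        (a * ((hL.isHermitian.submatrix (Subtype.val : {x // x ∈ A} → Fin N)).eigenvalues k) ^ 2
          + b * ((hL.isHermitian.submatrix (Subtype.val : {x // x ∈ A} → Fin N)).eigenvalues k)
          + c) =
      a * (∑ i, ∑ j, if i ≠ j then ‖L i j‖ ^ 2 * z i * z j else 0)
        + ∑ i, (a * (L i i).re ^ 2 + b * (L i i).re + c) * z i := by
  classical
  set M := L.submatrix (Subtype.val : {x // x ∈ A} → Fin N) (Subtype.val) with hMdef
  set hM := hL.isHermitian.submatrix (Subtype.val : {x // x ∈ A} → Fin N) with hhM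
  have hsum : ∑ k : {x // x ∈ A}, hM.eigenvalues k = ∑ i ∈ A, (L i i).re := by
    rw [aux_sum_eigenvalues M hM]
    rw [← Finset.sum_coe_sort A (fun i => (L i i).re)]
    rfl
  have hsq : ∑ k : {x // x ∈ A}, hM.eigenvalues k ^ 2 =
      ∑ i ∈ A, ∑ j ∈ A, ‖L i j‖ ^ 2 := by
    rw [aux_sum_eigenvalues_sq M hM]
    rw [← Finset.sum_coe_sort A (fun i => ∑ j ∈ A, ‖L i j‖ ^ 2)]
    congr 1
    funext i
    rw [← Finset.sum_coe_sort A (fun j => ‖L i j‖ ^ 2)]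
    rfl
  have hdiag : ∀ i, ‖L i i‖ ^ 2 = (L i i).re ^ 2 := by
    intro i
    have him : (L i i).im = 0 := Complex.conj_eq_iff_im.mp
      (by simpa [Matrix.conjTranspose_apply] using congrFun (congrFun hL.isHermitian i) i)
    rw [Complex.sq_norm, Complex.normSq_apply, him]
    ring
  have hsplit : ∑ i ∈ A, ∑ j ∈ A, ‖L i j‖ ^ 2 =
      (∑ i ∈ A, ∑ j ∈ A, if i ≠ j then ‖L i j‖ ^ 2 else 0)
        + ∑ i ∈ A, (L i i).re ^ 2 := by
    rw [← Finset.sum_add_distrib]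
    refine Finset.sum_congr rfl fun i hi => ?_
    rw [← hdiag i]
    have : ∀ j ∈ A, ‖L i j‖ ^ 2 =
        (if i ≠ j then ‖L i j‖ ^ 2 else 0)
          + (if j = i then ‖L i j‖ ^ 2 else 0) := by
      intro j _
      by_cases h : i = j <;> simp [h, Ne.symm]
    rw [Finset.sum_congr rfl this, Finset.sum_add_distrib, Finset.sum_ite_eq' A i
      (fun j => ‖L i j‖ ^ 2), if_pos hi]
  have hRHS1 : (∑ i, ∑ j, if i ≠ j then ‖L i j‖ ^ 2 * z i * z j else 0)
      = ∑ i ∈ A, ∑ j ∈ A, if i ≠ j then ‖L i j‖ ^ 2 else 0 := by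
    have step : ∀ i j, (if i ≠ j then ‖L i j‖ ^ 2 * z i * z j else 0)
        = if i ∈ A then (if j ∈ A then (if i ≠ j then ‖L i j‖ ^ 2 else 0)
            else 0) else 0 := by
      intro i j
      by_cases hi : i ∈ A <;> by_cases hj : j ∈ A <;> by_cases hij : i = j <;>
        simp [hz, hi, hj, hij]
    simp only [step]
    have pull : ∀ i : Fin N, (∑ j : Fin N, if i ∈ A then (if j ∈ A then
        (if i ≠ j then ‖L i j‖ ^ 2 else 0) else 0) else 0)
        = if i ∈ A then (∑ j : Fin N, if j ∈ A then
            (if i ≠ j then ‖L i j‖ ^ 2 else 0) else 0) else 0 := by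
      intro i
      split_ifs with hi
      · rfl
      · simp
    simp only [pull]
    rw [Finset.sum_ite_mem, Finset.univ_inter]
    refine Finset.sum_congr rfl fun i _ => ?_
    rw [Finset.sum_ite_mem, Finset.univ_inter]
  have hRHS2 : (∑ i, (a * (L i i).re ^ 2 + b * (L i i).re + c) * z i)
      = ∑ i ∈ A, (a * (L i i).re ^ 2 + b * (L i i).re + c) := by
    simp only [hz, mul_ite, mul_one, mul_zero]
    rw [Finset.sum_ite_mem, Finset.univ_inter]
  have hLHS : ∑ k : {x // x ∈ A}, (a * hM.eigenvalues k ^ 2 + b * hM.eigenvalues k + c)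
      = a * (∑ k : {x // x ∈ A}, hM.eigenvalues k ^ 2)
        + b * (∑ k : {x // x ∈ A}, hM.eigenvalues k) + c * A.card := by
    rw [Finset.sum_add_distrib, Finset.sum_add_distrib, ← Finset.mul_sum, ← Finset.mul_sum,
      Finset.sum_const]
    simp [Fintype.card_coe, mul_comm]
  rw [hLHS, hsq, hsum, hRHS1, hRHS2, hsplit]
  rw [Finset.sum_add_distrib, Finset.sum_add_distrib, Finset.sum_const, ← Finset.mul_sum,
    ← Finset.mul_sum]
  ring
end

section
/- For every positive semidefinite Hermitian matrix L, the set function A ↦ log det L[A] is submodular (with the convention log det L[∅] = 0), i.e., log det L[S] + log det L[T] ≥ log det L[S∪T] + log det L[S∩T] for all S, T ⊆ {1,…,N}, when L is positive definite. -/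
open ComplexOrder

namespace LogDetSubmodularAux

open Finset Matrix

variable {ι : Type*} [Fintype ι] [DecidableEq ι]

lemma sum_dite_subtype (A : Finset ι) (f : {i // i ∈ A} → ℂ) {s : Finset ι} (hAs : A ⊆ s) :
    (∑ i ∈ s, if h : i ∈ A then f ⟨i, h⟩ else 0) = ∑ a : {i // i ∈ A}, f a := by
  rw [← Finset.sum_subset hAs (fun x _ hx => dif_neg hx)]
  rw [Finset.univ_eq_attach, ← Finset.sum_attach A (fun i => if h : i ∈ A then f ⟨i, h⟩ else 0)]
  exact Finset.sum_congr rfl fun x _ => by simp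

lemma sum_dite_nested {A B : Finset ι} (hAB : A ⊆ B) (f : {i // i ∈ A} → ℂ) :
    (∑ b : {i // i ∈ B}, if h : b.1 ∈ A then f ⟨b.1, h⟩ else 0) = ∑ a : {i // i ∈ A}, f a := by
  rw [← sum_dite_subtype A f hAB, Finset.univ_eq_attach]
  exact Finset.sum_attach B (fun i => if h : i ∈ A then f ⟨i, h⟩ else 0)

/-- extension by zero of a vector on a subtype to a larger subtype -/
noncomputable def ext2 {A B : Finset ι} (y : {i // i ∈ A} → ℂ) : {i // i ∈ B} → ℂ :=
  fun b => if h : b.1 ∈ A then y ⟨b.1, h⟩ else 0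

lemma lin_nested {A B : Finset ι} (hAB : A ⊆ B) (y : {i // i ∈ A} → ℂ) (w : {i // i ∈ B} → ℂ) :
    star (ext2 (B := B) y) ⬝ᵥ w = star y ⬝ᵥ (fun a => w ⟨a.1, hAB a.2⟩) := by
  simp only [dotProduct, Pi.star_apply, ext2]
  rw [← sum_dite_nested hAB (fun a => star (y a) * w ⟨a.1, hAB a.2⟩)]
  refine Finset.sum_congr rfl fun b _ => ?_
  by_cases h : b.1 ∈ A
  · simp [h]
  · simp [h]

lemma quad_nested {A B : Finset ι} (hAB : A ⊆ B) (M : Matrix ι ι ℂ) (y : {i // i ∈ A} → ℂ) :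
    star (ext2 (B := B) y) ⬝ᵥ ((M.submatrix Subtype.val Subtype.val) *ᵥ ext2 (B := B) y)
      = star y ⬝ᵥ ((M.submatrix Subtype.val Subtype.val) *ᵥ y) := by
  simp only [dotProduct, Pi.star_apply, mulVec, ext2, submatrix_apply]
  have inner : ∀ i : ι, (∑ b : {i // i ∈ B}, M i b.1 * (if h : b.1 ∈ A then y ⟨b.1, h⟩ else 0))
      = ∑ a : {i // i ∈ A}, M i a.1 * y a := by
    intro i
    rw [← sum_dite_nested hAB (fun a => M i a.1 * y a)]
    refine Finset.sum_congr rfl fun b _ => ?_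
    by_cases h : b.1 ∈ A
    · simp [h]
    · simp [h]
  set g : {i // i ∈ A} → ℂ := fun c => star (y c) * ∑ a' : {i // i ∈ A}, M c.1 a'.1 * y a'
    with hg
  calc (∑ b : {i // i ∈ B}, star (if h : b.1 ∈ A then y ⟨b.1, h⟩ else 0) *
          ∑ b' : {i // i ∈ B}, M b.1 b'.1 * (if h : b'.1 ∈ A then y ⟨b'.1, h⟩ else 0))
      = ∑ b : {i // i ∈ B}, (if h : b.1 ∈ A then g ⟨b.1, h⟩ else 0) := by
        refine Finset.sum_congr rfl fun b _ => ?_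
        by_cases h : b.1 ∈ A
        · rw [dif_pos h, dif_pos h, inner b.1, hg]
        · rw [dif_neg h, dif_neg h, star_zero, zero_mul]
    _ = ∑ a : {i // i ∈ A}, g a := sum_dite_nested hAB g

/-- extension by zero from a subtype to the full type -/
noncomputable def ext1 (A : Finset ι) (y : {i // i ∈ A} → ℂ) : ι → ℂ :=
  fun i => if h : i ∈ A then y ⟨i, h⟩ else 0

lemma quad_full (A : Finset ι) (M : Matrix ι ι ℂ) (y : {i // i ∈ A} → ℂ) :
    star (ext1 A y) ⬝ᵥ (M *ᵥ ext1 A y)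
      = star y ⬝ᵥ ((M.submatrix Subtype.val Subtype.val) *ᵥ y) := by
  simp only [dotProduct, Pi.star_apply, mulVec, ext1, submatrix_apply]
  have inner : ∀ i : ι, (∑ k : ι, M i k * (if h : k ∈ A then y ⟨k, h⟩ else 0))
      = ∑ a : {i // i ∈ A}, M i a.1 * y a := by
    intro i
    rw [← sum_dite_subtype A (fun a => M i a.1 * y a) (Finset.subset_univ A)]
    refine Finset.sum_congr rfl fun k _ => ?_
    by_cases h : k ∈ A
    · simp [h]
    · simp [h]
  set g : {i // i ∈ A} → ℂ := fun c => star (y c) * ∑ a' : {i // i ∈ A}, M c.1 a'.1 * y a'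
    with hg
  calc (∑ i : ι, star (if h : i ∈ A then y ⟨i, h⟩ else 0) *
          ∑ k : ι, M i k * (if h : k ∈ A then y ⟨k, h⟩ else 0))
      = ∑ i : ι, (if h : i ∈ A then g ⟨i, h⟩ else 0) := by
        refine Finset.sum_congr rfl fun i _ => ?_
        by_cases h : i ∈ A
        · rw [dif_pos h, dif_pos h, inner i, hg]
        · rw [dif_neg h, dif_neg h, star_zero, zero_mul]
    _ = ∑ a : {i // i ∈ A}, g a := sum_dite_subtype A g (Finset.subset_univ A)

lemma posDef_submatrix {M : Matrix ι ι ℂ} (hM : M.PosDef) (A : Finset ι) :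
    (M.submatrix (Subtype.val : {i // i ∈ A} → ι) Subtype.val).PosDef := by
  refine Matrix.posDef_iff_dotProduct_mulVec.mpr ⟨hM.1.submatrix _, fun y hy => ?_⟩
  have hx : ext1 A y ≠ 0 := by
    obtain ⟨a, ha⟩ := Function.ne_iff.mp hy
    intro h0
    apply ha
    have := congrFun h0 a.1
    simpa [ext1, a.2] using this
  have := hM.dotProduct_mulVec_pos hx
  rwa [quad_full A M y] at this

lemma var_bound {n : Type*} [Fintype n] [DecidableEq n] {M : Matrix n n ℂ} (hM : M.PosDef)
    (v x : n → ℂ) :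
    2 * (star x ⬝ᵥ v).re - (star x ⬝ᵥ (M *ᵥ x)).re ≤ (star v ⬝ᵥ (M⁻¹ *ᵥ v)).re := by
  have hdet : IsUnit M.det := hM.isUnit.map detMonoidHom
  set w : n → ℂ := M⁻¹ *ᵥ v with hw
  have hMw : M *ᵥ w = v := by
    rw [hw, Matrix.mulVec_mulVec, Matrix.mul_nonsing_inv M hdet, Matrix.one_mulVec]
  have hstarw : star w = star v ᵥ* M⁻¹ := by
    rw [hw, Matrix.star_mulVec, Matrix.conjTranspose_nonsing_inv, hM.1.eq]
  have h1 : star x ⬝ᵥ (M *ᵥ w) = star x ⬝ᵥ v := by rw [hMw]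
  have h2 : star w ⬝ᵥ (M *ᵥ x) = star v ⬝ᵥ x := by
    rw [hstarw, ← Matrix.dotProduct_mulVec, Matrix.mulVec_mulVec,
      Matrix.nonsing_inv_mul M hdet, Matrix.one_mulVec]
  have h2' : (star w ⬝ᵥ (M *ᵥ x)).re = (star x ⬝ᵥ v).re := by
    rw [h2]
    have : star v ⬝ᵥ x = star (star x ⬝ᵥ v) := by
      simp [dotProduct, star_sum, star_mul', mul_comm]
    rw [this, Complex.star_def, Complex.conj_re]
  have h3 : star w ⬝ᵥ (M *ᵥ w) = star v ⬝ᵥ (M⁻¹ *ᵥ v) := by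
    rw [hMw, hstarw, ← Matrix.dotProduct_mulVec]
  have h0 : 0 ≤ (star (x - w) ⬝ᵥ (M *ᵥ (x - w))).re := by
    have := hM.posSemidef.re_dotProduct_nonneg (x - w)
    simpa using this
  have hexp : star (x - w) ⬝ᵥ (M *ᵥ (x - w))
      = star x ⬝ᵥ (M *ᵥ x) - star x ⬝ᵥ (M *ᵥ w) - star w ⬝ᵥ (M *ᵥ x) + star w ⬝ᵥ (M *ᵥ w) := by
    rw [star_sub, Matrix.mulVec_sub, sub_dotProduct, dotProduct_sub, dotProduct_sub]
    ring
  rw [hexp] at h0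
  simp only [Complex.add_re, Complex.sub_re, h1, h2', h3] at h0
  linarith

lemma q_mono {M : Matrix ι ι ℂ} (hM : M.PosDef) {A B : Finset ι} (hAB : A ⊆ B) (v : ι → ℂ) :
    (star (v ∘ (Subtype.val : {i // i ∈ A} → ι)) ⬝ᵥ
        ((M.submatrix (Subtype.val : {i // i ∈ A} → ι) Subtype.val)⁻¹ *ᵥ
          (v ∘ (Subtype.val : {i // i ∈ A} → ι)))).re ≤
      (star (v ∘ (Subtype.val : {i // i ∈ B} → ι)) ⬝ᵥ
        ((M.submatrix (Subtype.val : {i // i ∈ B} → ι) Subtype.val)⁻¹ *ᵥ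
          (v ∘ (Subtype.val : {i // i ∈ B} → ι)))).re := by
  set MA := M.submatrix (Subtype.val : {i // i ∈ A} → ι) Subtype.val with hMAdef
  set MB := M.submatrix (Subtype.val : {i // i ∈ B} → ι) Subtype.val with hMBdef
  have hMA : MA.PosDef := posDef_submatrix hM A
  have hMB : MB.PosDef := posDef_submatrix hM B
  have hdetA : IsUnit MA.det := hMA.isUnit.map detMonoidHom
  set vA : {i // i ∈ A} → ℂ := v ∘ Subtype.val with hvA
  set vB : {i // i ∈ B} → ℂ := v ∘ Subtype.val with hvB
  set y : {i // i ∈ A} → ℂ := MA⁻¹ *ᵥ vA with hy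
  have key := var_bound hMB vB (ext2 (B := B) y)
  have e1 : star (ext2 (B := B) y) ⬝ᵥ vB = star vA ⬝ᵥ (MA⁻¹ *ᵥ vA) := by
    rw [lin_nested hAB y vB]
    have : (fun a : {i // i ∈ A} => vB ⟨a.1, hAB a.2⟩) = vA := by
      funext a; rfl
    rw [this, hy, Matrix.star_mulVec, Matrix.conjTranspose_nonsing_inv,
      hMA.1.eq, ← Matrix.dotProduct_mulVec]
  have e2 : star (ext2 (B := B) y) ⬝ᵥ (MB *ᵥ ext2 (B := B) y) = star vA ⬝ᵥ (MA⁻¹ *ᵥ vA) := by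
    rw [hMBdef, quad_nested hAB M y, ← hMAdef]
    rw [hy, Matrix.mulVec_mulVec, Matrix.mul_nonsing_inv MA hdetA, Matrix.one_mulVec]
    rw [Matrix.star_mulVec, Matrix.conjTranspose_nonsing_inv,
      hMA.1.eq, ← Matrix.dotProduct_mulVec]
  rw [e1, e2] at key
  calc (star vA ⬝ᵥ (MA⁻¹ *ᵥ vA)).re
      = 2 * (star vA ⬝ᵥ (MA⁻¹ *ᵥ vA)).re - (star vA ⬝ᵥ (MA⁻¹ *ᵥ vA)).re := by ring
    _ ≤ (star vB ⬝ᵥ (MB⁻¹ *ᵥ vB)).re := key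

/-- The equivalence `{i // i ∈ X} ⊕ Unit ≃ {i // i ∈ insert j X}` for `j ∉ X`. -/
def insertEquiv (X : Finset ι) (j : ι) (hj : j ∉ X) :
    ({i // i ∈ X} ⊕ Unit) ≃ {i // i ∈ insert j X} where
  toFun := Sum.elim (fun a => ⟨a.1, Finset.mem_insert_of_mem a.2⟩)
    (fun _ => ⟨j, Finset.mem_insert_self j X⟩)
  invFun := fun b => if h : b.1 ∈ X then Sum.inl ⟨b.1, h⟩ else Sum.inr ()
  left_inv := by
    rintro (a | ⟨⟩)
    · simp [a.2]
    · simp [hj]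
  right_inv := by
    rintro ⟨b, hb⟩
    by_cases h : b ∈ X
    · simp [h]
    · have hbj : b = j := by
        rcases Finset.mem_insert.mp hb with h' | h'
        · exact h'
        · exact absurd h' h
      subst hbj
      simp [h]

lemma det_insert {L : Matrix ι ι ℂ} (hL : L.PosDef) {X : Finset ι} {j : ι} (hj : j ∉ X) :
    (L.submatrix (Subtype.val : {i // i ∈ insert j X} → ι) Subtype.val).det
      = (L.submatrix (Subtype.val : {i // i ∈ X} → ι) Subtype.val).det *
        (L j j - star ((fun i => L i j) ∘ (Subtype.val : {i // i ∈ X} → ι)) ⬝ᵥ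
          ((L.submatrix (Subtype.val : {i // i ∈ X} → ι) Subtype.val)⁻¹ *ᵥ
            ((fun i => L i j) ∘ (Subtype.val : {i // i ∈ X} → ι)))) := by
  classical
  set MX := L.submatrix (Subtype.val : {i // i ∈ X} → ι) Subtype.val with hMX
  have hdetX : IsUnit MX.det := (posDef_submatrix hL X).isUnit.map detMonoidHom
  haveI : Invertible MX := MX.invertibleOfIsUnitDet hdetX
  set e := insertEquiv X j hj with he
  have hblocks : (L.submatrix (Subtype.val : {i // i ∈ insert j X} → ι) Subtype.val).submatrix e e
      = fromBlocks MX (Matrix.of fun (a : {i // i ∈ X}) (_ : Unit) => L a.1 j)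
          (Matrix.of fun (_ : Unit) (a : {i // i ∈ X}) => L j a.1)
          (Matrix.of fun (_ : Unit) (_ : Unit) => L j j) := by
    ext i k
    rcases i with a | ⟨⟩ <;> rcases k with b | ⟨⟩ <;> rfl
  rw [← Matrix.det_submatrix_equiv_self e, hblocks, Matrix.det_fromBlocks₁₁]
  congr 1
  rw [Matrix.det_unique]
  show L j j - _ = L j j - _
  congr 1
  have hC : ∀ b : {i // i ∈ X}, L j b.1 = star (L b.1 j) := fun b => (hL.1.apply j b.1).symm
  simp only [Matrix.mul_apply, dotProduct, mulVec, Matrix.of_apply, Pi.star_apply,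
    Function.comp_apply, Finset.sum_mul]
  rw [Matrix.invOf_eq_nonsing_inv, Finset.sum_comm]
  refine Finset.sum_congr rfl fun b _ => ?_
  rw [Finset.mul_sum]
  refine Finset.sum_congr rfl fun a _ => ?_
  rw [hC b]
  ring

lemma det_re_pos {L : Matrix ι ι ℂ} (hL : L.PosDef) (X : Finset ι) :
    0 < (L.submatrix (Subtype.val : {i // i ∈ X} → ι) Subtype.val).det.re := by
  have := (posDef_submatrix hL X).det_pos
  exact (Complex.lt_def.mp this).1

lemma det_im_zero {L : Matrix ι ι ℂ} (hL : L.PosDef) (X : Finset ι) :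
    (L.submatrix (Subtype.val : {i // i ∈ X} → ι) Subtype.val).det.im = 0 := by
  have := (posDef_submatrix hL X).det_pos
  exact ((Complex.lt_def.mp this).2).symm

lemma step {L : Matrix ι ι ℂ} (hL : L.PosDef) {A B : Finset ι} (hAB : A ⊆ B) {j : ι}
    (hjB : j ∉ B) :
    (L.submatrix (Subtype.val : {i // i ∈ A} → ι) Subtype.val).det.re *
        (L.submatrix (Subtype.val : {i // i ∈ insert j B} → ι) Subtype.val).det.re ≤
      (L.submatrix (Subtype.val : {i // i ∈ insert j A} → ι) Subtype.val).det.re *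
        (L.submatrix (Subtype.val : {i // i ∈ B} → ι) Subtype.val).det.re := by
  have hjA : j ∉ A := fun h => hjB (hAB h)
  have hA := det_insert hL hjA
  have hB := det_insert hL hjB
  have hq := q_mono hL hAB (fun i => L i j)
  set qA := star ((fun i => L i j) ∘ (Subtype.val : {i // i ∈ A} → ι)) ⬝ᵥ
    ((L.submatrix (Subtype.val : {i // i ∈ A} → ι) Subtype.val)⁻¹ *ᵥ
      ((fun i => L i j) ∘ (Subtype.val : {i // i ∈ A} → ι))) with hqA
  set qB := star ((fun i => L i j) ∘ (Subtype.val : {i // i ∈ B} → ι)) ⬝ᵥ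
    ((L.submatrix (Subtype.val : {i // i ∈ B} → ι) Subtype.val)⁻¹ *ᵥ
      ((fun i => L i j) ∘ (Subtype.val : {i // i ∈ B} → ι))) with hqB
  have hreA : (L.submatrix (Subtype.val : {i // i ∈ insert j A} → ι) Subtype.val).det.re
      = (L.submatrix (Subtype.val : {i // i ∈ A} → ι) Subtype.val).det.re
        * (L j j - qA).re := by
    rw [hA, Complex.mul_re, det_im_zero hL A, zero_mul, sub_zero]
  have hreB : (L.submatrix (Subtype.val : {i // i ∈ insert j B} → ι) Subtype.val).det.re
      = (L.submatrix (Subtype.val : {i // i ∈ B} → ι) Subtype.val).det.re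
        * (L j j - qB).re := by
    rw [hB, Complex.mul_re, det_im_zero hL B, zero_mul, sub_zero]
  have hα : (L j j - qB).re ≤ (L j j - qA).re := by
    simp only [Complex.sub_re]
    linarith
  have hpA := det_re_pos hL A
  have hpB := det_re_pos hL B
  have hpinsB := det_re_pos hL (insert j B)
  have hαB : 0 < (L j j - qB).re := by
    by_contra hcon
    push_neg at hcon
    nlinarith
  rw [hreA, hreB]
  have hkey := mul_le_mul_of_nonneg_left hα (le_of_lt (mul_pos hpA hpB))
  nlinarith [hkey]

lemma main {L : Matrix ι ι ℂ} (hL : L.PosDef) (S T : Finset ι) :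
    (L.submatrix (Subtype.val : {i // i ∈ S ∪ T} → ι) Subtype.val).det.re *
        (L.submatrix (Subtype.val : {i // i ∈ S ∩ T} → ι) Subtype.val).det.re ≤
      (L.submatrix (Subtype.val : {i // i ∈ S} → ι) Subtype.val).det.re *
        (L.submatrix (Subtype.val : {i // i ∈ T} → ι) Subtype.val).det.re := by
  suffices H : ∀ (n : ℕ) (S T : Finset ι), (S \ T).card = n →
      (L.submatrix (Subtype.val : {i // i ∈ S ∪ T} → ι) Subtype.val).det.re *
        (L.submatrix (Subtype.val : {i // i ∈ S ∩ T} → ι) Subtype.val).det.re ≤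
      (L.submatrix (Subtype.val : {i // i ∈ S} → ι) Subtype.val).det.re *
        (L.submatrix (Subtype.val : {i // i ∈ T} → ι) Subtype.val).det.re by
    exact H _ S T rfl
  intro n
  induction n with
  | zero =>
    intro S T hST
    have hsub : S ⊆ T := by
      rw [← Finset.sdiff_eq_empty_iff_subset]
      exact Finset.card_eq_zero.mp hST
    have h1 : S ∪ T = T := Finset.union_eq_right.mpr hsub
    have h2 : S ∩ T = S := Finset.inter_eq_left.mpr hsub
    rw [h1, h2, mul_comm]
  | succ n ih =>
    intro S T hST
    have hne : (S \ T).Nonempty := Finset.card_pos.mp (by rw [hST]; exact n.succ_pos)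
    obtain ⟨j, hj⟩ := hne
    obtain ⟨hjS, hjT⟩ := Finset.mem_sdiff.mp hj
    set S' := S.erase j with hS'
    have hcard : (S' \ T).card = n := by
      have : S' \ T = (S \ T).erase j := by
        ext x
        simp only [hS', Finset.mem_sdiff, Finset.mem_erase]
        tauto
      rw [this, Finset.card_erase_of_mem hj, hST]
      rfl
    have IH := ih S' T hcard
    have hins : insert j S' = S := Finset.insert_erase hjS
    have hSU : S ∪ T = insert j (S' ∪ T) := by
      rw [← hins, Finset.insert_union]
    have hSI : S' ∩ T = S ∩ T := by
      ext x
      simp only [hS', Finset.mem_inter, Finset.mem_erase]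
      constructor
      · rintro ⟨⟨_, hx⟩, ht⟩; exact ⟨hx, ht⟩
      · rintro ⟨hx, ht⟩; exact ⟨⟨fun hxj => hjT (hxj ▸ ht), hx⟩, ht⟩
    have hjS' : j ∉ S' := Finset.notMem_erase j S
    have hjU : j ∉ S' ∪ T := by
      simp only [Finset.mem_union]
      rintro (h | h)
      · exact hjS' h
      · exact hjT h
    have hstep := step hL (Finset.subset_union_left : S' ⊆ S' ∪ T) hjU
    rw [hins] at hstep
    rw [hSI] at IH
    rw [hSU]
    have hpS' := det_re_pos hL S'
    have hpS := det_re_pos hL S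
    have hpT := det_re_pos hL T
    have hpI := det_re_pos hL (S ∩ T)
    have hpU' := det_re_pos hL (S' ∪ T)
    nlinarith
  
end LogDetSubmodularAux

open ComplexOrder

/-- For a positive definite Hermitian matrix `L`, the set function
`A ↦ log det L[A]` is submodular (with `log det L[∅] = log 1 = 0`). -/
theorem log_det_submatrix_submodular {N : ℕ} (L : Matrix (Fin N) (Fin N) ℂ)
    (hL : L.PosDef) (S T : Finset (Fin N)) :
    Real.log ((L.submatrix (Subtype.val : {x // x ∈ S ∪ T} → Fin N) Subtype.val).det.re) +
      Real.log ((L.submatrix (Subtype.val : {x // x ∈ S ∩ T} → Fin N) Subtype.val).det.re) ≤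
    Real.log ((L.submatrix (Subtype.val : {x // x ∈ S} → Fin N) Subtype.val).det.re) +
      Real.log ((L.submatrix (Subtype.val : {x // x ∈ T} → Fin N) Subtype.val).det.re) := by
  have hU := LogDetSubmodularAux.det_re_pos hL (S ∪ T)
  have hI := LogDetSubmodularAux.det_re_pos hL (S ∩ T)
  have hS := LogDetSubmodularAux.det_re_pos hL S
  have hT := LogDetSubmodularAux.det_re_pos hL T
  rw [← Real.log_mul hU.ne' hI.ne', ← Real.log_mul hS.ne' hT.ne']
  exact Real.log_le_log (mul_pos hU hI) (LogDetSubmodularAux.main hL S T)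
end

section
/- Stationarity condition of the mean-field coordinate ascent: for a set function f on 2^Y and a product Bernoulli distribution Q_q, the partial derivative of the ELBO L(q) = H[Q_q] + E_{ξ∼Q_q}[f(A_ξ)] with respect to q_i equals log((1−q_i)/q_i) + E_{ξ_{∖i} ∼ Q_{q_{∖i}}}[ f(A_{ξ_{∖i}} ∪ {i}) − f(A_{ξ_{∖i}}) ]; hence the stationary point satisfies q_i = σ( E[ f(i | A_{ξ_{∖i}}) ] ), with σ the logistic sigmoid. -/
/-- Stationarity condition of the mean-field coordinate ascent: the partial derivative of
the ELBO `L(q) = H[Q_q] + E_{ξ∼Q_q}[f(A_ξ)]` with respect to `q_i` equals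
`log((1−q_i)/q_i) + E_{ξ_{∖i}∼Q_{q_{∖i}}}[f(A ∪ {i}) − f(A)]`; hence a stationary point
satisfies `q_i = σ(E[f(i | A_{ξ_{∖i}})])` with `σ` the logistic sigmoid. -/
theorem mean_field_stationarity {N : ℕ} (f : Finset (Fin N) → ℝ)
    (q : Fin N → ℝ) (hq : ∀ j, q j ∈ Set.Ioo (0 : ℝ) 1) (i : Fin N) :
    HasDerivAt
      (fun t : ℝ =>
        (∑ j, (-(Function.update q i t j) * Real.log (Function.update q i t j)
            - (1 - Function.update q i t j) * Real.log (1 - Function.update q i t j))) +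
          ∑ A : Finset (Fin N),
            f A * (∏ j ∈ A, Function.update q i t j) * ∏ j ∈ Aᶜ, (1 - Function.update q i t j))
      (Real.log ((1 - q i) / q i) +
        ∑ A ∈ ({i}ᶜ : Finset (Fin N)).powerset,
          (f (insert i A) - f A) * (∏ j ∈ A, q j) * ∏ j ∈ ({i}ᶜ : Finset (Fin N)) \ A, (1 - q j))
      (q i) ∧
    ((Real.log ((1 - q i) / q i) +
        ∑ A ∈ ({i}ᶜ : Finset (Fin N)).powerset,
          (f (insert i A) - f A) * (∏ j ∈ A, q j) * ∏ j ∈ ({i}ᶜ : Finset (Fin N)) \ A, (1 - q j))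
        = 0 →
      q i = 1 / (1 + Real.exp (-(∑ A ∈ ({i}ᶜ : Finset (Fin N)).powerset,
          (f (insert i A) - f A) * (∏ j ∈ A, q j) *
            ∏ j ∈ ({i}ᶜ : Finset (Fin N)) \ A, (1 - q j))))) := by
  obtain ⟨hq0, hq1⟩ := hq i
  have hx1 : (0:ℝ) < 1 - q i := by linarith
  constructor
  · apply HasDerivAt.add
    · -- entropy part
      have h : HasDerivAt (fun t : ℝ => ∑ j,
          (-(Function.update q i t j) * Real.log (Function.update q i t j)
            - (1 - Function.update q i t j) * Real.log (1 - Function.update q i t j)))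
          (∑ j : Fin N, if j = i then Real.log ((1 - q i) / q i) else 0) (q i) := by
        apply HasDerivAt.fun_sum
        intro j _
        by_cases hj : j = i
        · subst hj
          simp only [Function.update_self]
          have h1 : HasDerivAt (fun t : ℝ => t * Real.log t) (Real.log (q j) + 1) (q j) :=
            Real.hasDerivAt_mul_log (ne_of_gt hq0)
          have h2 : HasDerivAt (fun t : ℝ => (1 - t) * Real.log (1 - t))
              ((Real.log (1 - q j) + 1) * (-1)) (q j) := by
            have hg : HasDerivAt (fun t : ℝ => 1 - t) (-1 : ℝ) (q j) :=
              (hasDerivAt_id (q j)).const_sub 1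
            exact (Real.hasDerivAt_mul_log (ne_of_gt hx1)).comp (q j) hg
          have h3 := h1.neg.sub h2
          rw [if_true]
          convert h3 using 1
          · funext t; simp only [Pi.sub_apply, Pi.neg_apply]; ring
          · rw [Real.log_div (ne_of_gt hx1) (ne_of_gt hq0)]; ring
        · simp only [Function.update_of_ne hj]
          rw [if_neg hj]
          exact hasDerivAt_const _ _
      convert h using 1
      · rfl
      · rfl
      simp
    · -- multilinear part
      classical
      set d : Finset (Fin N) → ℝ := fun A =>
        if i ∈ A then f A * (∏ j ∈ A \ {i}, q j) * ∏ j ∈ Aᶜ, (1 - q j)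
        else -(f A * (∏ j ∈ A, q j) * ∏ j ∈ Aᶜ \ {i}, (1 - q j)) with hd
      have h : HasDerivAt (fun t : ℝ => ∑ A : Finset (Fin N),
          f A * (∏ j ∈ A, Function.update q i t j) * ∏ j ∈ Aᶜ, (1 - Function.update q i t j))
          (∑ A : Finset (Fin N), d A) (q i) := by
        apply HasDerivAt.fun_sum
        intro A _
        by_cases hA : i ∈ A
        · have heq : (fun t : ℝ => f A * (∏ j ∈ A, Function.update q i t j) *
              ∏ j ∈ Aᶜ, (1 - Function.update q i t j)) =
              fun t : ℝ => f A * (t * ∏ j ∈ A \ {i}, q j) * ∏ j ∈ Aᶜ, (1 - q j) := by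
            funext t
            rw [Finset.prod_update_of_mem hA]
            congr 1
            apply Finset.prod_congr rfl
            intro j hj
            rw [Function.update_of_ne]
            intro hji
            exact (Finset.mem_compl.mp hj) (hji ▸ hA)
          rw [heq, hd]
          simp only [if_pos hA]
          have := (((hasDerivAt_id (q i)).mul_const (∏ j ∈ A \ {i}, q j)).const_mul
            (f A)).mul_const (∏ j ∈ Aᶜ, (1 - q j))
          convert this using 1
          · rfl
          · rfl
          ring
        · have hAc : i ∈ Aᶜ := Finset.mem_compl.mpr hA
          have heq : (fun t : ℝ => f A * (∏ j ∈ A, Function.update q i t j) *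
              ∏ j ∈ Aᶜ, (1 - Function.update q i t j)) =
              fun t : ℝ => f A * (∏ j ∈ A, q j) * ((1 - t) * ∏ j ∈ Aᶜ \ {i}, (1 - q j)) := by
            funext t
            have e1 : (∏ j ∈ A, Function.update q i t j) = ∏ j ∈ A, q j := by
              apply Finset.prod_congr rfl
              intro j hj
              rw [Function.update_of_ne]
              intro hji; exact hA (hji ▸ hj)
            have e2 : (∏ j ∈ Aᶜ, (1 - Function.update q i t j)) =
                ∏ j ∈ Aᶜ, Function.update (fun j => 1 - q j) i (1 - t) j := by
              apply Finset.prod_congr rfl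
              intro j _
              by_cases hji : j = i
              · subst hji; simp
              · rw [Function.update_of_ne hji, Function.update_of_ne hji]
            rw [e1, e2, Finset.prod_update_of_mem hAc]
          rw [heq, hd]
          simp only [if_neg hA]
          have := (((hasDerivAt_id (q i)).const_sub 1).mul_const
            (∏ j ∈ Aᶜ \ {i}, (1 - q j))).const_mul (f A * ∏ j ∈ A, q j)
          convert this using 1
          · rfl
          · rfl
          ring
      convert h using 1
      · rfl
      · rfl
      -- reindex the sum
      have huniv : (Finset.univ : Finset (Fin N)) = insert i ({i}ᶜ : Finset (Fin N)) := by
        ext j; by_cases hj : j = i <;> simp [hj]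
      have hni : i ∉ ({i}ᶜ : Finset (Fin N)) := by simp
      rw [show (∑ A : Finset (Fin N), d A) =
          ∑ A ∈ (Finset.univ : Finset (Fin N)).powerset, d A by rw [Finset.powerset_univ],
        huniv, Finset.sum_powerset_insert hni, add_comm, ← Finset.sum_add_distrib]
      apply Finset.sum_congr rfl
      intro B hB
      have hBsub : B ⊆ ({i}ᶜ : Finset (Fin N)) := Finset.mem_powerset.mp hB
      have hiB : i ∉ B := fun h => (Finset.mem_compl.mp (hBsub h)) (Finset.mem_singleton_self i)
      have hins : i ∈ insert i B := Finset.mem_insert_self i B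
      rw [hd]
      simp only [if_pos hins, if_neg hiB]
      have e1 : (insert i B) \ {i} = B := by
        ext j; simp only [Finset.mem_sdiff, Finset.mem_insert, Finset.mem_singleton]
        constructor
        · rintro ⟨h1 | h1, h2⟩
          · exact absurd h1 h2
          · exact h1
        · intro h; exact ⟨Or.inr h, fun hj => hiB (hj ▸ h)⟩
      have e2 : (insert i B)ᶜ = ({i}ᶜ : Finset (Fin N)) \ B := by
        ext j
        simp only [Finset.mem_compl, Finset.mem_insert, Finset.mem_sdiff, Finset.mem_singleton]
        tauto
      have e3 : Bᶜ \ {i} = ({i}ᶜ : Finset (Fin N)) \ B := by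
        ext j
        simp only [Finset.mem_compl, Finset.mem_sdiff, Finset.mem_singleton]
        tauto
      rw [e1, e2, e3]
      ring
  · -- stationarity ⇒ sigmoid
    intro h
    set S : ℝ := ∑ A ∈ ({i}ᶜ : Finset (Fin N)).powerset,
        (f (insert i A) - f A) * (∏ j ∈ A, q j) *
          ∏ j ∈ ({i}ᶜ : Finset (Fin N)) \ A, (1 - q j) with hS
    have hlog : Real.log ((1 - q i) / q i) = -S := by linarith
    have hpos : (0:ℝ) < (1 - q i) / q i := div_pos hx1 hq0
    have hexp : (1 - q i) / q i = Real.exp (-S) := by rw [← Real.exp_log hpos, hlog]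
    have h1 : 1 - q i = Real.exp (-S) * q i := by
      field_simp at hexp
      linarith [hexp]
    rw [eq_div_iff (by positivity : (1:ℝ) + Real.exp (-S) ≠ 0)]
    nlinarith [h1]
end
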